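/- The nested cup states expand as signed sums of anti-symmetrical basis vectors: define Ω_m ∈ V^⊗2m recursively by Ω₁ = v₊⊗v₋ − q⁻¹·(v₋⊗v₊) and Ω_{m+1} = (id^{⊗m} ⊗ δ ⊗ id^{⊗m})(Ω_m) (inserting δ(1) into the two middle slots). Then for every m ≥ 1, Ω_m = Σ_f (−q⁻¹)^{|{i : f(i) = +}|} · v_{f^a} ⊗ v_f, where the sum is over all sign words f : {1,…,m} → {+,−}, v_f denotes the corresponding standard basis vector of V^⊗m, and f^a is the reversed sign-flipped word f^a(i) = −f(m+1−i) (with −(+) = − and −(−) = +). -/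

import Mathlib

noncomputable section

/-- `V^{⊗n}` (with `V = ℂ²`) realized as ℂ-valued functions on sign words
`Fin n → Fin 2`; the sign `0` stands for `v₊` and `1` for `v₋`. -/
abbrev SpinSpace (n : ℕ) : Type := (Fin n → Fin 2) → ℂ

/-- The standard basis vector `v_f` of `V^{⊗n}`. -/
def basisVec {n : ℕ} (f : Fin n → Fin 2) : SpinSpace n :=
  fun g => if g = f then 1 else 0

/-- The sign flip: `+ ↦ −`, `− ↦ +`. -/
def flipSign (s : Fin 2) : Fin 2 := if s = 0 then 1 else 0

/-- The map `id^{⊗p} ⊗ δ ⊗ id^{⊗(m−p)} : V^{⊗m} → V^{⊗(m+2)}` inserting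
`δ(1) = v₊⊗v₋ − q⁻¹·(v₋⊗v₊)` into tensor slots `p+1, p+2` (1-based). -/
def deltaIns (q : ℂ) (m p : ℕ) (hp : p ≤ m) : SpinSpace m →ₗ[ℂ] SpinSpace (m + 2) where
  toFun x g :=
    (if g ⟨p, by omega⟩ = 0 ∧ g ⟨p + 1, by omega⟩ = 1 then (1 : ℂ)
      else if g ⟨p, by omega⟩ = 1 ∧ g ⟨p + 1, by omega⟩ = 0 then -q⁻¹ else 0) *
      x (fun j => if h : (j : ℕ) < p then g ⟨(j : ℕ), by have := j.isLt; omega⟩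
          else g ⟨(j : ℕ) + 2, by have := j.isLt; omega⟩)
  map_add' x y := by
    funext g
    simp only [Pi.add_apply]
    ring
  map_smul' c x := by
    funext g
    simp only [Pi.smul_apply, smul_eq_mul, RingHom.id_apply]
    ring

/-- The nested cup states: `Ω₁ = δ(1) = v₊⊗v₋ − q⁻¹·(v₋⊗v₊)` and
`Ω_{m+1} = (id^{⊗m} ⊗ δ ⊗ id^{⊗m})(Ω_m)` (inserting `δ(1)` into the two middle slots).
(`Ω₀` is the empty tensor `1`; applying the recursion once yields `Ω₁` as above.) -/
def Omega (q : ℂ) : (m : ℕ) → SpinSpace (2 * m)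
  | 0 => fun _ => 1
  | m + 1 => deltaIns q (2 * m) m (by omega) (Omega q m)

/-- The anti-symmetrical word `(f^a, f)` of length `2m` attached to a sign word `f` of
length `m`, where `f^a(i) = −f(m+1−i)` is the reversed sign-flipped word; the vector
`v_{f^a} ⊗ v_f` is the corresponding anti-symmetrical standard basis vector. -/
def antiWord {m : ℕ} (f : Fin m → Fin 2) : Fin (2 * m) → Fin 2 := fun j =>
  if h : (j : ℕ) < m then flipSign (f ⟨m - 1 - (j : ℕ), by omega⟩)
  else f ⟨(j : ℕ) - m, by have := j.isLt; omega⟩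

def ins {m : ℕ} (w : Fin m → Fin 2) (p : ℕ) (hp : p ≤ m) (a b : Fin 2) :
    Fin (m + 2) → Fin 2 := fun j =>
  if h : (j : ℕ) < p then w ⟨(j : ℕ), by omega⟩
  else if h2 : (j : ℕ) = p then a
  else if h3 : (j : ℕ) = p + 1 then b
  else w ⟨(j : ℕ) - 2, by have := j.isLt; omega⟩

lemma ins_lt {m : ℕ} (w : Fin m → Fin 2) (p : ℕ) (hp : p ≤ m) (a b : Fin 2)
    (j : Fin (m + 2)) (h : (j : ℕ) < p) : ins w p hp a b j = w ⟨(j : ℕ), by omega⟩ := by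
  simp only [ins, dif_pos h]

lemma ins_eq1 {m : ℕ} (w : Fin m → Fin 2) (p : ℕ) (hp : p ≤ m) (a b : Fin 2)
    (j : Fin (m + 2)) (h : (j : ℕ) = p) : ins w p hp a b j = a := by
  simp only [ins]
  rw [dif_neg (by omega), dif_pos h]

lemma ins_eq2 {m : ℕ} (w : Fin m → Fin 2) (p : ℕ) (hp : p ≤ m) (a b : Fin 2)
    (j : Fin (m + 2)) (h : (j : ℕ) = p + 1) : ins w p hp a b j = b := by
  simp only [ins]
  rw [dif_neg (by omega), dif_neg (by omega), dif_pos h]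

lemma ins_ge {m : ℕ} (w : Fin m → Fin 2) (p : ℕ) (hp : p ≤ m) (a b : Fin 2)
    (j : Fin (m + 2)) (h : p + 2 ≤ (j : ℕ)) :
    ins w p hp a b j = w ⟨(j : ℕ) - 2, by have := j.isLt; omega⟩ := by
  simp only [ins]
  rw [dif_neg (by omega), dif_neg (by omega), dif_neg (by omega)]

lemma eq_ins_iff {m : ℕ} (w : Fin m → Fin 2) (p : ℕ) (hp : p ≤ m) (a b : Fin 2)
    (g : Fin (m + 2) → Fin 2) :
    g = ins w p hp a b ↔
      ((fun j : Fin m => if h : (j : ℕ) < p then g ⟨(j : ℕ), by have := j.isLt; omega⟩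
          else g ⟨(j : ℕ) + 2, by have := j.isLt; omega⟩) = w)
      ∧ g ⟨p, by omega⟩ = a ∧ g ⟨p + 1, by omega⟩ = b := by
  constructor
  · rintro rfl
    refine ⟨funext fun j => ?_, ?_, ?_⟩
    · show (if h : (j : ℕ) < p then ins w p hp a b ⟨(j : ℕ), by have := j.isLt; omega⟩
          else ins w p hp a b ⟨(j : ℕ) + 2, by have := j.isLt; omega⟩) = w j
      by_cases h : (j : ℕ) < p
      · rw [dif_pos h, ins_lt w p hp a b _ h]
      · rw [dif_neg h, ins_ge w p hp a b _ (by simp; omega)]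
        exact congrArg w (Fin.ext (by simp))
    · exact ins_eq1 w p hp a b _ rfl
    · exact ins_eq2 w p hp a b _ rfl
  · rintro ⟨hr, ha, hb⟩
    funext j
    rcases lt_or_ge (j : ℕ) p with h1 | h1
    · rw [ins_lt w p hp a b j h1]
      have := congrFun hr ⟨(j : ℕ), by omega⟩
      rw [dif_pos h1] at this
      rw [← this]
    · rcases eq_or_lt_of_le h1 with h2 | h2
      · rw [ins_eq1 w p hp a b j h2.symm, ← ha]
        exact congrArg g (Fin.ext (by simp only [Fin.val_mk]; omega))
      · rcases eq_or_lt_of_le (Nat.succ_le_of_lt h2) with h3 | h3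
        · rw [ins_eq2 w p hp a b j (by omega), ← hb]
          exact congrArg g (Fin.ext (by simp only [Fin.val_mk]; omega))
        · rw [ins_ge w p hp a b j (by omega)]
          have := congrFun hr ⟨(j : ℕ) - 2, by have := j.isLt; omega⟩
          rw [dif_neg (by simp; omega)] at this
          rw [← this]
          exact congrArg g (Fin.ext (by simp; omega))
lemma deltaIns_basis (q : ℂ) (m p : ℕ) (hp : p ≤ m) (w : Fin m → Fin 2) :
    deltaIns q m p hp (basisVec w) =
      basisVec (ins w p hp 0 1) + (-q⁻¹) • basisVec (ins w p hp 1 0) := by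
  funext g
  simp only [deltaIns, LinearMap.coe_mk, AddHom.coe_mk, basisVec, Pi.add_apply,
    Pi.smul_apply, smul_eq_mul]
  by_cases hr : (fun j : Fin m => if h : (j : ℕ) < p then g ⟨(j : ℕ), by have := j.isLt; omega⟩
          else g ⟨(j : ℕ) + 2, by have := j.isLt; omega⟩) = w
  · have h2 : ∀ s : Fin 2, s = 0 ∨ s = 1 := by decide
    rcases h2 (g ⟨p, by omega⟩) with ha | ha <;> rcases h2 (g ⟨p + 1, by omega⟩) with hb | hb
    · have e1 : g ≠ ins w p hp 0 1 := fun h => by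
        have := ((eq_ins_iff w p hp 0 1 g).1 h).2.2
        rw [hb] at this; exact absurd this (by decide)
      have e2 : g ≠ ins w p hp 1 0 := fun h => by
        have := ((eq_ins_iff w p hp 1 0 g).1 h).2.1
        rw [ha] at this; exact absurd this (by decide)
      rw [if_neg (by simp [ha, hb]), if_neg (by simp [ha]), if_pos hr,
        if_neg e1, if_neg e2]
      ring
    · have e1 : g = ins w p hp 0 1 := (eq_ins_iff w p hp 0 1 g).2 ⟨hr, ha, hb⟩
      have e2 : g ≠ ins w p hp 1 0 := fun h => by
        have := ((eq_ins_iff w p hp 1 0 g).1 h).2.1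
        rw [ha] at this; exact absurd this (by decide)
      rw [if_pos ⟨ha, hb⟩, if_pos hr, if_pos e1, if_neg e2]
      ring
    · have e1 : g ≠ ins w p hp 0 1 := fun h => by
        have := ((eq_ins_iff w p hp 0 1 g).1 h).2.1
        rw [ha] at this; exact absurd this (by decide)
      have e2 : g = ins w p hp 1 0 := (eq_ins_iff w p hp 1 0 g).2 ⟨hr, ha, hb⟩
      rw [if_neg (by simp [ha]), if_pos ⟨ha, hb⟩, if_pos hr, if_neg e1, if_pos e2]
      ring
    · have e1 : g ≠ ins w p hp 0 1 := fun h => by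
        have := ((eq_ins_iff w p hp 0 1 g).1 h).2.1
        rw [ha] at this; exact absurd this (by decide)
      have e2 : g ≠ ins w p hp 1 0 := fun h => by
        have := ((eq_ins_iff w p hp 1 0 g).1 h).2.2
        rw [hb] at this; exact absurd this (by decide)
      rw [if_neg (by simp [ha]), if_neg (by simp [hb]), if_pos hr, if_neg e1, if_neg e2]
      ring
  · have e1 : g ≠ ins w p hp 0 1 := fun h => hr ((eq_ins_iff w p hp 0 1 g).1 h).1
    have e2 : g ≠ ins w p hp 1 0 := fun h => hr ((eq_ins_iff w p hp 1 0 g).1 h).1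
    rw [if_neg hr, if_neg e1, if_neg e2]
    ring
lemma antiWord_lt {m : ℕ} (f : Fin m → Fin 2) (j : Fin (2 * m)) (h : (j : ℕ) < m) :
    antiWord f j = flipSign (f ⟨m - 1 - (j : ℕ), by omega⟩) := by
  simp only [antiWord, dif_pos h]

lemma antiWord_ge {m : ℕ} (f : Fin m → Fin 2) (j : Fin (2 * m)) (h : m ≤ (j : ℕ)) :
    antiWord f j = f ⟨(j : ℕ) - m, by have := j.isLt; omega⟩ := by
  simp only [antiWord]
  rw [dif_neg (by omega)]

lemma antiWord_cons {m : ℕ} (s : Fin 2) (f : Fin m → Fin 2) :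
    antiWord (Fin.cons s f) = ins (antiWord f) m (by omega) (flipSign s) s := by
  funext j
  rcases lt_or_ge (j : ℕ) m with h1 | h1
  · rw [ins_lt (antiWord f) m (by omega) _ _ j h1,
      antiWord_lt (Fin.cons s f) j (by omega),
      antiWord_lt f ⟨(j : ℕ), by omega⟩ (by simpa using h1)]
    have he : (⟨m + 1 - 1 - (j : ℕ), by omega⟩ : Fin (m + 1)) =
        Fin.succ ⟨m - 1 - (j : ℕ), by omega⟩ := Fin.ext (by simp; omega)
    rw [he, Fin.cons_succ]
  · rcases eq_or_lt_of_le h1 with h2 | h2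
    · rw [ins_eq1 (antiWord f) m (by omega) _ _ j h2.symm,
        antiWord_lt (Fin.cons s f) j (by omega)]
      have he : (⟨m + 1 - 1 - (j : ℕ), by omega⟩ : Fin (m + 1)) = 0 :=
        Fin.ext (by simp; omega)
      rw [he, Fin.cons_zero]
    · rcases eq_or_lt_of_le (Nat.succ_le_of_lt h2) with h3 | h3
      · rw [ins_eq2 (antiWord f) m (by omega) _ _ j (by omega),
          antiWord_ge (Fin.cons s f) j (by omega)]
        have he : (⟨(j : ℕ) - (m + 1), by have := j.isLt; omega⟩ : Fin (m + 1)) = 0 :=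
          Fin.ext (by simp; omega)
        rw [he, Fin.cons_zero]
      · rw [ins_ge (antiWord f) m (by omega) _ _ j (by omega),
          antiWord_ge (Fin.cons s f) j (by omega),
          antiWord_ge f ⟨(j : ℕ) - 2, by have := j.isLt; omega⟩ (by simp; omega)]
        have he : (⟨(j : ℕ) - (m + 1), by have := j.isLt; omega⟩ : Fin (m + 1)) =
            Fin.succ ⟨(j : ℕ) - 2 - m, by have := j.isLt; omega⟩ :=
          Fin.ext (by simp; omega)
        rw [he, Fin.cons_succ]

lemma card_zeros_cons {m : ℕ} (s : Fin 2) (f : Fin m → Fin 2) :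
    (Finset.univ.filter fun i : Fin (m + 1) => Fin.cons (α := fun _ => Fin 2) s f i = 0).card =
      (if s = 0 then 1 else 0) + (Finset.univ.filter fun i => f i = 0).card := by
  rw [Finset.card_filter, Finset.card_filter, Fin.sum_univ_succ]
  simp
lemma omega_sum (q : ℂ) (m : ℕ) :
    Omega q m = ∑ f : Fin m → Fin 2,
      ((-q⁻¹) ^ (Finset.univ.filter fun i => f i = 0).card) • basisVec (antiWord f) := by
  induction m with
  | zero =>
      rw [Fintype.sum_unique]
      funext g
      have h0 : (Finset.univ : Finset (Fin 0)) = ∅ := rfl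
      have hg : g = antiWord (default : Fin 0 → Fin 2) :=
        funext fun j => absurd j.isLt (by omega)
      simp only [h0, Finset.filter_empty, Finset.card_empty, pow_zero, one_smul, basisVec]
      rw [hg]
      simp only [Omega]
      split
      · rfl
      · rename_i hcon
        exact (hcon (congrArg antiWord (funext fun j => j.elim0))).elim
  | succ m ih =>
      show deltaIns q (2 * m) m (by omega) (Omega q m) = _
      rw [ih, map_sum]
      have key : ∀ f : Fin m → Fin 2,
          deltaIns q (2 * m) m (by omega)
              (((-q⁻¹) ^ (Finset.univ.filter fun i => f i = 0).card) • basisVec (antiWord f)) =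
            ((-q⁻¹) ^ (Finset.univ.filter fun i : Fin (m + 1) =>
                Fin.cons (α := fun _ => Fin 2) 1 f i = 0).card) •
                basisVec (antiWord (Fin.cons 1 f)) +
              ((-q⁻¹) ^ (Finset.univ.filter fun i : Fin (m + 1) =>
                Fin.cons (α := fun _ => Fin 2) 0 f i = 0).card) •
                basisVec (antiWord (Fin.cons 0 f)) := by
        intro f
        rw [map_smul, deltaIns_basis]
        rw [show ins (antiWord f) m (by omega) 0 1 = antiWord (Fin.cons 1 f) from by
          rw [antiWord_cons, show flipSign 1 = 0 from rfl]]
        rw [show ins (antiWord f) m (by omega) 1 0 = antiWord (Fin.cons 0 f) from by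
          rw [antiWord_cons, show flipSign 0 = 1 from rfl]]
        rw [card_zeros_cons, card_zeros_cons,
          if_neg (by decide : ¬ (1 : Fin 2) = 0), if_pos rfl, zero_add]
        rw [smul_add, smul_smul]
        congr 1
        ring
      rw [Finset.sum_congr rfl fun f _ => key f, Finset.sum_add_distrib]
      have hre := Fintype.sum_equiv (Fin.consEquiv fun _ : Fin (m + 1) => Fin 2)
        (fun p : Fin 2 × (Fin m → Fin 2) =>
          ((-q⁻¹) ^ (Finset.univ.filter fun i : Fin (m + 1) =>
              Fin.cons (α := fun _ => Fin 2) p.1 p.2 i = 0).card) •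
            basisVec (antiWord (Fin.cons p.1 p.2)))
        (fun f : Fin (m + 1) → Fin 2 =>
          ((-q⁻¹) ^ (Finset.univ.filter fun i => f i = 0).card) • basisVec (antiWord f))
        (fun p => rfl)
      rw [← hre, Fintype.sum_prod_type, Fin.sum_univ_two]
      exact add_comm _ _

/-- The nested cup states expand as signed sums of anti-symmetrical basis vectors:
for every `m ≥ 1`,
`Ω_m = Σ_f (−q⁻¹)^{#{i : f(i) = +}} · v_{f^a} ⊗ v_f`,
the sum being over all sign words `f` of length `m`. -/
theorem Omega_eq_signed_sum (q : ℂ) (hq : q ≠ 0) (m : ℕ) (hm : 1 ≤ m) :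
    Omega q m = ∑ f : Fin m → Fin 2,
      ((-q⁻¹) ^ (Finset.univ.filter fun i => f i = 0).card) • basisVec (antiWord f) :=
  omega_sum q m
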